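/- arXiv:1812.05542 — 7 statements merged into one kernel-verified Lean document; each statement's English description precedes it below -/
import Mathlib

section
/- Let (α,β) ∈ V with α ≠ β, let m ∈ ℕ (m ≥ 1) and s ∈ ℕ₀. Then the function ι(m,m+s;·) : [1, 2m−1] → ℝ has at most one zero. Moreover, if m ≥ 2 or a ≥ 0, then ι(m,m+s;1) ≥ 0. -/
open Polynomial Finset

noncomputable def poch (c : ℝ) (k : ℕ) : ℝ := (ascPochhammer ℝ k).eval c

/-- Jacobi polynomial `R_n^{(α,β)}`, normalized by `R_n^{(α,β)}(1) = 1`. -/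
noncomputable def jacobiR (α β : ℝ) (n : ℕ) : Polynomial ℝ :=
  ∑ k ∈ Finset.range (n + 1),
    Polynomial.C (poch (-(n : ℝ)) k * poch ((n : ℝ) + α + β + 1) k /
      (poch (α + 1) k * 2 ^ k * (Nat.factorial k : ℝ))) * (1 - Polynomial.X) ^ k

/-- Generalized Chebyshev polynomial `T_n^{(α,β)}`. -/
noncomputable def genCheb (α β : ℝ) (n : ℕ) : Polynomial ℝ :=
  if n % 2 = 0 then (jacobiR α β (n / 2)).comp (2 * Polynomial.X ^ 2 - 1)
  else Polynomial.X * (jacobiR α (β + 1) (n / 2)).comp (2 * Polynomial.X ^ 2 - 1)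

/-- Gasper's set `V` (with `a = α+β+1`, `b = α−β`). -/
def Vset : Set (ℝ × ℝ) := { p | -1 < p.1 ∧ -1 < p.2 ∧
  ((p.1 + p.2 + 1) ^ 2 - 7 * (p.1 + p.2 + 1) - 24) * (p.1 - p.2) ^ 2 ≤
    (p.1 + p.2 + 1) * ((p.1 + p.2 + 1) + 5) * ((p.1 + p.2 + 1) + 3) ^ 2 ∧
  0 ≤ p.1 - p.2 }

/-- The set `V′`. -/
def V'set : Set (ℝ × ℝ) := { p | -1 < p.1 ∧ -1 < p.2 ∧
  0 ≤ (p.1 + p.2 + 1) ^ 2 + 2 * (p.1 - p.2) ^ 2 + 3 * (p.1 + p.2 + 1) ∧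
  0 ≤ p.1 - p.2 }

/-- The set `Δ`. -/
def Dset : Set (ℝ × ℝ) := { p | -1 < p.1 ∧ -1 < p.2 ∧
  0 ≤ p.1 + p.2 + 1 ∧ 0 ≤ p.1 - p.2 }

/-- The coefficient function `ι(m, m+s; ·)` (with parameters `a`, `b`). -/
noncomputable def iotaF (a b : ℝ) (m s : ℕ) (j : ℝ) : ℝ :=
  b * ((2 * (m : ℝ) - j) * (2 * (m : ℝ) + 2 * (s : ℝ) + j + 2 * a) *
        ((2 * (s : ℝ) + j + 1) * (j + 1)) / (2 * (s : ℝ) + 2 * j + a + 1)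
      - (2 * (m : ℝ) - j + 1) * (2 * (m : ℝ) + 2 * (s : ℝ) + j + 2 * a - 1) *
        ((2 * (s : ℝ) + j) * j) / (2 * (s : ℝ) + 2 * j + a - 1))

/-- The coefficient function `θ(m, m+s; ·)` (with parameters `a`, `b`). -/
noncomputable def thetaF (a b : ℝ) (m s : ℕ) (j : ℝ) : ℝ :=
  (2 * (m : ℝ) - j + a - 1) * (2 * (m : ℝ) + 2 * (s : ℝ) + j + a + 1) *
    ((2 * (s : ℝ) + j + 1) * (2 * (s : ℝ) + 2 * j + a - b + 1)) /
    ((2 * (s : ℝ) + 2 * j + a + 1) * (2 * (s : ℝ) + 2 * j + a + 2)) * (j + 1)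

/-- The coefficient function `κ(m, m+s; ·)` (with parameters `a`, `b`). -/
noncomputable def kappaF (a b : ℝ) (m s : ℕ) (j : ℝ) : ℝ :=
  (2 * (m : ℝ) - j + 1) * (2 * (m : ℝ) + 2 * (s : ℝ) + j + 2 * a - 1) *
    ((2 * (s : ℝ) + j + a - 1) * (2 * (s : ℝ) + 2 * j + a + b - 1)) /
    ((2 * (s : ℝ) + 2 * j + a - 2) * (2 * (s : ℝ) + 2 * j + a - 1)) * (j + a - 1)

/-- Recurrence coefficient `a^T_{2k+1} = (2k+a+b+1)/(4k+2a+2)`. -/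
noncomputable def aTc (a b : ℝ) (k : ℕ) : ℝ :=
  (2 * (k : ℝ) + a + b + 1) / (4 * (k : ℝ) + 2 * a + 2)

/-- Recurrence coefficient `c^T_{2k+1} = (2k+a−b+1)/(4k+2a+2)`. -/
noncomputable def cTc (a b : ℝ) (k : ℕ) : ℝ :=
  (2 * (k : ℝ) + a - b + 1) / (4 * (k : ℝ) + 2 * a + 2)

/-- The auxiliary function `p`. -/
noncomputable def pF (a b : ℝ) (m s j : ℕ) : ℝ :=
  cTc a b (s + j + 1) / aTc a b (s + j) *
    (iotaF (a + 1) (b - 1) m s (j : ℝ) / thetaF (a + 1) (b - 1) m s (j : ℝ))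

/-- The auxiliary function `q`. -/
noncomputable def qF (a b : ℝ) (m s j : ℕ) : ℝ :=
  (cTc a b (s + j) * cTc a b (s + j + 1)) / (aTc a b (s + j - 1) * aTc a b (s + j)) *
    (kappaF (a + 1) (b - 1) m s (j : ℝ) / thetaF (a + 1) (b - 1) m s (j : ℝ))


/-!
Over the common denominator `(2s+2j+a+1)(2s+2j+a−1)`, positive for `j ≥ 1`, the bracket in
`ι(m,m+s;j)` is `iotaNum a m s w`, a quadratic with leading coefficient `−6` in
`w = j² + (2s+a)j`, and `w` is strictly increasing for `j ≥ 1`. Two distinct zeros of `ι` in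
`[1, 2m−1]` would thus give two roots of `iotaNum` at or above `w(1) = 2s+a+1`, forcing
`iotaNum` to be `≤ 0` at `w(1)`. But on `V` with `b > 0` one has `4a² + 11a + 3 > 0`, which makes
`iotaNum` positive at `w(1)` as soon as `m ≥ 2`; for `m = 1` the interval is a point. The value
there also gives the sign of `ι(m,m+s;1)`, which is `b` times it divided by a positive number.
-/

theorem quadratic_nonpos_of_le_roots {A B C w₀ w₁ w₂ : ℝ} (hA : A ≤ 0)
    (h₁ : A * w₁ ^ 2 + B * w₁ + C = 0) (h₂ : A * w₂ ^ 2 + B * w₂ + C = 0)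
    (hne : w₁ ≠ w₂) (hw₁ : w₀ ≤ w₁) (hw₂ : w₀ ≤ w₂) : A * w₀ ^ 2 + B * w₀ + C ≤ 0 := by
  have hB : B = -A * (w₁ + w₂) := by
    have h : (w₁ - w₂) * (A * (w₁ + w₂) + B) = 0 := by linear_combination h₁ - h₂
    linear_combination (mul_eq_zero.mp h).resolve_left (sub_ne_zero.mpr hne)
  have hfactor : A * w₀ ^ 2 + B * w₀ + C = A * ((w₀ - w₁) * (w₀ - w₂)) := by
    subst hB
    linear_combination h₁
  rw [hfactor]
  exact mul_nonpos_of_nonpos_of_nonneg hA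
    (mul_nonneg_of_nonpos_of_nonpos (by linarith) (by linarith))

theorem strictMonoOn_sq_add_mul {c : ℝ} (hc : -2 ≤ c) :
    StrictMonoOn (fun j : ℝ => j ^ 2 + c * j) (Set.Ici 1) := by
  intro x hx y hy hxy
  simp only [Set.mem_Ici] at hx hy
  nlinarith [mul_pos (sub_pos.mpr hxy) (by linarith : 0 < x + y + c)]

theorem four_mul_sq_add_eleven_mul_add_three_pos {a b : ℝ} (ha : -1 < a) (hb : 0 < b)
    (hba : b < a + 1) (hV : (a ^ 2 - 7 * a - 24) * b ^ 2 ≤ a * (a + 5) * (a + 3) ^ 2) :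
    0 < 4 * a ^ 2 + 11 * a + 3 := by
  have hV' : (a ^ 2 - 7 * a - 24) * (b ^ 2 - (a + 1) ^ 2) ≤
      4 * (a + 2) * (4 * a ^ 2 + 11 * a + 3) := by
    linear_combination hV
  by_contra! h
  have hcoef : a ^ 2 - 7 * a - 24 < 0 := by nlinarith
  have hlhs : 0 < (a ^ 2 - 7 * a - 24) * (b ^ 2 - (a + 1) ^ 2) :=
    mul_pos_of_neg_of_neg hcoef (by nlinarith)
  have hrhs : 4 * (a + 2) * (4 * a ^ 2 + 11 * a + 3) ≤ 0 :=
    mul_nonpos_of_nonneg_of_nonpos (by linarith) h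
  linarith

def iotaNum (a M S w : ℝ) : ℝ :=
  -6 * w ^ 2 + (8*M^2 + 8*M*S + 8*M*a - 8*S^2 - 8*S*a - 2*a + 2) * w
    + (16*M^2*S^2 + 8*M^2*S*a + 4*M^2*a - 4*M^2 + 16*M*S^3 + 24*M*S^2*a + 8*M*S*a^2
      + 4*M*S*a - 4*M*S + 4*M*a^2 - 4*M*a)

theorem iotaF_eq_mul_iotaNum_div (a b : ℝ) (m s : ℕ) {j : ℝ}
    (h₁ : 2 * (s : ℝ) + 2 * j + a + 1 ≠ 0) (h₂ : 2 * (s : ℝ) + 2 * j + a - 1 ≠ 0) :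
    iotaF a b m s j = b * iotaNum a m s (j ^ 2 + (2 * s + a) * j) /
      ((2 * s + 2 * j + a + 1) * (2 * s + 2 * j + a - 1)) := by
  rw [iotaF, div_sub_div _ _ h₁ h₂, mul_div_assoc, iotaNum]
  ring_nf

theorem iotaNum_eq_zero_of_iotaF_eq_zero {a b : ℝ} {m s : ℕ} {j : ℝ} (ha : -1 < a)
    (hb : b ≠ 0) (hj : 1 ≤ j) (h : iotaF a b m s j = 0) :
    iotaNum a m s (j ^ 2 + (2 * s + a) * j) = 0 := by
  have hs : (0 : ℝ) ≤ s := s.cast_nonneg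
  rw [iotaF_eq_mul_iotaNum_div a b m s (by linarith) (by linarith)] at h
  have hden : (2 * s + 2 * j + a + 1) * (2 * s + 2 * j + a - 1) ≠ 0 :=
    mul_ne_zero (by linarith) (by linarith)
  simpa [hb, hden] using h

theorem eq_of_iotaF_eq_zero {a b : ℝ} {m s : ℕ} (ha : -1 < a) (hb : b ≠ 0)
    (hpos : 0 < iotaNum a m s (2 * s + a + 1)) {j₁ j₂ : ℝ} (hj₁ : 1 ≤ j₁)
    (hj₂ : 1 ≤ j₂) (h₁ : iotaF a b m s j₁ = 0) (h₂ : iotaF a b m s j₂ = 0) : j₁ = j₂ := by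
  have hw := strictMonoOn_sq_add_mul (c := 2 * s + a) (by linarith [s.cast_nonneg (α := ℝ)])
  by_contra hne
  have hle : iotaNum a m s (1 ^ 2 + (2 * s + a) * 1) ≤ 0 :=
    quadratic_nonpos_of_le_roots (by norm_num)
      (iotaNum_eq_zero_of_iotaF_eq_zero ha hb hj₁ h₁)
      (iotaNum_eq_zero_of_iotaF_eq_zero ha hb hj₂ h₂) (hw.injOn.ne hj₁ hj₂ hne)
      (hw.monotoneOn Set.self_mem_Ici hj₁ hj₁) (hw.monotoneOn Set.self_mem_Ici hj₂ hj₂)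
  rw [show (1 : ℝ) ^ 2 + (2 * s + a) * 1 = 2 * s + a + 1 by ring] at hle
  exact hle.not_gt hpos

theorem iotaF_one_nonneg {a b : ℝ} {m s : ℕ} (ha : -1 < a) (hb : 0 ≤ b)
    (hN : 0 ≤ iotaNum a m s (2 * s + a + 1)) : 0 ≤ iotaF a b m s 1 := by
  have hs : (0 : ℝ) ≤ s := s.cast_nonneg
  rw [iotaF_eq_mul_iotaNum_div a b m s (by linarith) (by linarith),
    show (1 : ℝ) ^ 2 + (2 * s + a) * 1 = 2 * s + a + 1 by ring]
  exact div_nonneg (mul_nonneg hb hN) (mul_pos (by linarith) (by linarith)).le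

theorem iotaNum_pos_of_two_le {a M S : ℝ} (hM : 2 ≤ M) (hS : 0 ≤ S) (ha : -1 < a)
    (h4 : 0 < 4 * a ^ 2 + 11 * a + 3) : 0 < iotaNum a M S (2 * S + a + 1) := by
  obtain ⟨u, hu, rfl⟩ : ∃ u, 0 ≤ u ∧ M = u + 2 := ⟨M - 2, by linarith, by ring⟩
  have : 0 < 3 * a + 1 := by nlinarith
  have : 0 < 8 * a ^ 2 + 52 * a + 52 := by nlinarith
  have : 0 < 8 * a ^ 2 + 60 * a + 68 := by nlinarith
  have : 0 < 24 * a + 64 := by linarith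
  have : 0 < 24 * a + 80 := by linarith
  have : 0 < 8 * a + 16 := by linarith
  have : 0 < a + 4 := by linarith
  have hexpand : iotaNum a (u + 2) S (2 * S + a + 1) =
      4 * (4 * a ^ 2 + 11 * a + 3) + S * (8 * a ^ 2 + 52 * a + 52) + S ^ 2 * (24 * a + 64)
        + 16 * S ^ 3
      + u * (4 * (3 * a + 1) * (a + 4) + S * (8 * a ^ 2 + 60 * a + 68) + S ^ 2 * (24 * a + 80)
        + 16 * S ^ 3)
      + u ^ 2 * (4 * (3 * a + 1) + S * (8 * a + 16) + 16 * S ^ 2) := by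
    unfold iotaNum; ring
  rw [hexpand]
  positivity

theorem iotaNum_nonneg_of_nonneg {a M S : ℝ} (hM : 1 ≤ M) (hS : 0 ≤ S) (ha : 0 ≤ a) :
    0 ≤ iotaNum a M S (2 * S + a + 1) := by
  obtain ⟨u, hu, rfl⟩ : ∃ u, 0 ≤ u ∧ M = u + 1 := ⟨M - 1, by linarith, by ring⟩
  have hexpand : iotaNum a (u + 1) S (2 * S + a + 1) =
      4 * a + 4 * a ^ 2 + u * (8 + 28 * a + 12 * a ^ 2 + S * (36 + 44 * a + 8 * a ^ 2)
        + S ^ 2 * (48 + 24 * a) + 16 * S ^ 3)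
      + u ^ 2 * (4 + 12 * a + S * (16 + 8 * a) + 16 * S ^ 2) := by
    unfold iotaNum; ring
  rw [hexpand]
  positivity

/-- For `(α,β) ∈ V` with `α ≠ β`, the function `ι(m,m+s;·)` has at most one zero
on `[1, 2m−1]`; moreover, if `m ≥ 2` or `a ≥ 0`, then `ι(m,m+s;1) ≥ 0`. -/
theorem stmt7 (α β : ℝ) (hV : (α, β) ∈ Vset) (hab : α ≠ β)
    (m : ℕ) (hm : 1 ≤ m) (s : ℕ) :
    (∀ j₁ ∈ Set.Icc (1 : ℝ) (2 * (m : ℝ) - 1), ∀ j₂ ∈ Set.Icc (1 : ℝ) (2 * (m : ℝ) - 1),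
      iotaF (α + β + 1) (α - β) m s j₁ = 0 → iotaF (α + β + 1) (α - β) m s j₂ = 0 →
        j₁ = j₂) ∧
    ((2 ≤ m ∨ 0 ≤ α + β + 1) → 0 ≤ iotaF (α + β + 1) (α - β) m s 1) := by
  obtain ⟨hα, hβ, hVineq, hb⟩ := hV
  have hb : 0 < α - β := hb.lt_of_ne (sub_ne_zero.mpr hab).symm
  have ha : -1 < α + β + 1 := by linarith
  have h4 := four_mul_sq_add_eleven_mul_add_three_pos ha hb (by linarith) hVineq
  have hs : (0 : ℝ) ≤ s := s.cast_nonneg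
  have hpos (hm : 2 ≤ m) : 0 < iotaNum (α + β + 1) m s (2 * s + (α + β + 1) + 1) :=
    iotaNum_pos_of_two_le (by exact_mod_cast hm) hs ha h4
  refine ⟨fun j₁ hj₁ j₂ hj₂ h₁ h₂ => ?_, fun h => iotaF_one_nonneg ha hb.le ?_⟩
  · rcases hm.eq_or_lt with rfl | hm
    · norm_num at hj₁ hj₂
      rw [hj₁, hj₂]
    · exact eq_of_iotaF_eq_zero ha hb.ne' (hpos hm) hj₁.1 hj₂.1 h₁ h₂
  · rcases h with hm | ha₀
    · exact (hpos hm).le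
    · exact iotaNum_nonneg_of_nonneg (by exact_mod_cast hm) hs ha₀
end

section
/- Let α, β > −1 with α ≠ β (i.e., b ≠ 0). Then the following are equivalent: (i) for all m ∈ ℕ (m ≥ 1) and all s ∈ ℕ₀, the function ι(m,m+s;·) : [1, 2m−1] → ℝ has at most one zero; (ii) a > −11/8 + √73/8. -/
open Polynomial Finset

/-- Cleared-denominator form of `iotaF / b`. -/
noncomputable def Gf (a m s j : ℝ) : ℝ :=
  (2*m - j) * (2*m + 2*s + j + 2*a) * ((2*s + j + 1) * (j + 1)) * (2*s + 2*j + a - 1)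
    - (2*m - j + 1) * (2*m + 2*s + j + 2*a - 1) * ((2*s + j) * j) * (2*s + 2*j + a + 1)

lemma Gf_repr (a m s j : ℝ) :
    Gf a m s j =
      -6 * ((j + (2*s + a)/2)^2)^2
        + (8*m^2 + 8*m*s + 8*m*a + 4*s^2 + 4*s*a + 3*a^2 - 2*a + 2) * (j + (2*s + a)/2)^2
        + (8*m^2*s^2 - 2*m^2*a^2 + 4*m^2*a - 4*m^2 + 8*m*s^3 + 8*m*s^2*a - 2*m*s*a^2
            + 4*m*s*a - 4*m*s - 2*m*a^3 + 4*m*a^2 - 4*m*a + 2*s^4 + 4*s^3*a + s^2*a^2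
            + 2*s^2*a - 2*s^2 - s*a^3 + 2*s*a^2 - 2*s*a - (3/8)*a^4 + (1/2)*a^3 - (1/2)*a^2) := by
  unfold Gf; ring

lemma a_gt_third (a : ℝ) (ha : -1 < a) (hq : 0 < 4*a^2 + 11*a + 3) : -1/3 < a := by
  by_contra h
  push_neg at h
  nlinarith [mul_nonneg (by linarith : (0:ℝ) ≤ a + 1) (by linarith : (0:ℝ) ≤ -1/3 - a)]

lemma Gf_one_pos (a m s : ℝ) (hm : 2 ≤ m) (hs : 0 ≤ s) (ha : -1/3 < a)
    (hq : 0 < 4*a^2 + 11*a + 3) : 0 < Gf a m s 1 := by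
  have h17 : 0 < 2*a^2 + 15*a + 17 := by nlinarith [sq_nonneg (a+1)]
  have h13 : 0 < 2*a^2 + 13*a + 13 := by nlinarith [sq_nonneg (a+1)]
  have hk : 0 < 3*a + 1 := by linarith
  have hb1 : 0 < 4*s^2 + 2*s*a + 4*s + 3*a + 1 := by
    nlinarith [sq_nonneg s, mul_nonneg hs (by linarith : (0:ℝ) ≤ a + 1)]
  have hb2 : 0 < 4*s^3 + 6*s^2*a + 20*s^2 + 2*s*a^2 + 15*s*a + 17*s + 3*a^2 + 13*a + 4 := by
    nlinarith [mul_nonneg hs h17.le, mul_nonneg (mul_nonneg hs hs) hk.le,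
      mul_nonneg (mul_nonneg hs hs) hs, sq_nonneg s,
      mul_pos hk (by linarith : (0:ℝ) < a + 4)]
  have hb3 : 0 < 4*s^2 + 6*s*a + 16*s + 2*a^2 + 13*a + 13 := by
    nlinarith [sq_nonneg s, mul_nonneg hs hk.le]
  have hrepr : Gf a m s 1 =
      4*(4*a^2 + 11*a + 3) + 4*(m-2)^2*(4*s^2 + 2*s*a + 4*s + 3*a + 1)
        + 4*(m-2)*(4*s^3 + 6*s^2*a + 20*s^2 + 2*s*a^2 + 15*s*a + 17*s + 3*a^2 + 13*a + 4)
        + 4*s*(4*s^2 + 6*s*a + 16*s + 2*a^2 + 13*a + 13) := by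
    unfold Gf; ring
  rw [hrepr]
  have hM : (0:ℝ) ≤ m - 2 := by linarith
  nlinarith [mul_nonneg (mul_nonneg hM hM) hb1.le, mul_nonneg hM hb2.le,
    mul_nonneg hs hb3.le]

/-- No two distinct zeros of `Gf` with `1 ≤ j₁ < j₂`, when `m ≥ 2` and the parameter
condition holds. -/
lemma Gf_key (a m s : ℝ) (hm : 2 ≤ m) (hs : 0 ≤ s) (ha : -1 < a)
    (hq : 0 < 4*a^2 + 11*a + 3) (j₁ j₂ : ℝ) (hj1 : 1 ≤ j₁) (hlt : j₁ < j₂)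
    (hG1 : Gf a m s j₁ = 0) (hG2 : Gf a m s j₂ = 0) : False := by
  have ha3 : -1/3 < a := a_gt_third a ha hq
  obtain ⟨B, hB⟩ : ∃ B : ℝ, B = 8*m^2 + 8*m*s + 8*m*a + 4*s^2 + 4*s*a + 3*a^2 - 2*a + 2 :=
    ⟨_, rfl⟩
  obtain ⟨C, hC⟩ : ∃ C : ℝ, C = 8*m^2*s^2 - 2*m^2*a^2 + 4*m^2*a - 4*m^2 + 8*m*s^3
      + 8*m*s^2*a - 2*m*s*a^2 + 4*m*s*a - 4*m*s - 2*m*a^3 + 4*m*a^2 - 4*m*a + 2*s^4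
      + 4*s^3*a + s^2*a^2 + 2*s^2*a - 2*s^2 - s*a^3 + 2*s*a^2 - 2*s*a - (3/8)*a^4
      + (1/2)*a^3 - (1/2)*a^2 := ⟨_, rfl⟩
  obtain ⟨t₁, ht1⟩ : ∃ t : ℝ, t = (j₁ + (2*s + a)/2)^2 := ⟨_, rfl⟩
  obtain ⟨t₂, ht2⟩ : ∃ t : ℝ, t = (j₂ + (2*s + a)/2)^2 := ⟨_, rfl⟩
  obtain ⟨T, hT⟩ : ∃ t : ℝ, t = ((1:ℝ) + (2*s + a)/2)^2 := ⟨_, rfl⟩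
  have hu0 : (0:ℝ) < 1 + (2*s + a)/2 := by linarith
  have hTt1 : T ≤ t₁ := by
    rw [hT, ht1]
    exact pow_le_pow_left₀ hu0.le (by linarith) 2
  have ht12 : t₁ < t₂ := by
    rw [ht1, ht2]
    exact pow_lt_pow_left₀ (by linarith) (by linarith) (by norm_num)
  have hq1 : -6*t₁^2 + B*t₁ + C = 0 := by
    rw [ht1, hB, hC, ← Gf_repr]; exact hG1
  have hq2 : -6*t₂^2 + B*t₂ + C = 0 := by
    rw [ht2, hB, hC, ← Gf_repr]; exact hG2
  have hBsum : B = 6*(t₁ + t₂) := by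
    have hfac : (t₁ - t₂) * (B - 6*(t₁ + t₂)) = 0 := by linear_combination hq1 - hq2
    rcases mul_eq_zero.1 hfac with h | h
    · exact absurd h (by intro h'; linarith)
    · linarith
  have hCval : C = -6*t₁*t₂ := by linear_combination hq1 - t₁ * hBsum
  have hval : Gf a m s 1 = -6*(T - t₁)*(T - t₂) := by
    rw [Gf_repr, ← hT, ← hB, ← hC]
    linear_combination T * hBsum + hCval
  have hpos := Gf_one_pos a m s hm hs ha3 hq
  nlinarith [mul_nonneg (by linarith : (0:ℝ) ≤ t₁ - T) (by linarith : (0:ℝ) ≤ t₂ - T)]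

/-- relation between `iotaF` and `Gf`. -/
lemma iota_mul (a b : ℝ) (m s : ℕ) (j : ℝ) (h1 : 2*(s:ℝ) + 2*j + a + 1 ≠ 0)
    (h2 : 2*(s:ℝ) + 2*j + a - 1 ≠ 0) :
    iotaF a b m s j * ((2*(s:ℝ) + 2*j + a + 1) * (2*(s:ℝ) + 2*j + a - 1))
      = b * Gf a (m:ℝ) (s:ℝ) j := by
  unfold iotaF Gf
  rw [div_sub_div _ _ h1 h2, mul_assoc, div_mul_cancel₀ _ (mul_ne_zero h1 h2)]
  ring

/-- For `b ≠ 0`: the function `ι(m,m+s;·)` has at most one zero on `[1, 2m−1]`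
for all `m ≥ 1` and `s ∈ ℕ₀` iff `a > −11/8 + √73/8`. -/
theorem stmt8 (α β : ℝ) (hα : -1 < α) (hβ : -1 < β) (hab : α ≠ β) :
    (∀ m : ℕ, 1 ≤ m → ∀ s : ℕ,
      ∀ j₁ ∈ Set.Icc (1 : ℝ) (2 * (m : ℝ) - 1), ∀ j₂ ∈ Set.Icc (1 : ℝ) (2 * (m : ℝ) - 1),
        iotaF (α + β + 1) (α - β) m s j₁ = 0 → iotaF (α + β + 1) (α - β) m s j₂ = 0 →
          j₁ = j₂) ↔
      -11 / 8 + Real.sqrt 73 / 8 < α + β + 1 := by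
  set a : ℝ := α + β + 1 with hadef
  have ha : -1 < a := by simp only [hadef]; linarith
  have hb : α - β ≠ 0 := sub_ne_zero.2 hab
  have hr2 : Real.sqrt 73 ^ 2 = 73 := Real.sq_sqrt (by norm_num)
  have hr0 : (0:ℝ) ≤ Real.sqrt 73 := Real.sqrt_nonneg 73
  have hr3 : (3:ℝ) < Real.sqrt 73 := by nlinarith
  constructor
  · -- uniqueness ⇒ a > a₀, by contradiction via m = 2, s = 0
    intro H
    by_contra hA
    push_neg at hA
    have hP : 4*a^2 + 11*a + 3 ≤ 0 := by
      nlinarith [mul_nonneg (by linarith : (0:ℝ) ≤ -11/8 + Real.sqrt 73/8 - a)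
        (by nlinarith : (0:ℝ) ≤ a - (-11/8 - Real.sqrt 73/8))]
    have hcont : ContinuousOn (fun j : ℝ => Gf a 2 0 j) (Set.Icc 1 2) := by
      unfold Gf; fun_prop
    have hcont' : ContinuousOn (fun j : ℝ => Gf a 2 0 j) (Set.Icc 2 3) := by
      unfold Gf; fun_prop
    have e1 : Gf a 2 0 1 = 4*(4*a^2 + 11*a + 3) := by unfold Gf; ring
    have e2 : Gf a 2 0 2 = 12*(a+1)*(a+2) := by unfold Gf; ring
    have e3 : Gf a 2 0 3 = -4*(a^2 + 22*a + 49) := by unfold Gf; ring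
    have h2pos : 0 < Gf a 2 0 2 := by
      rw [e2]; nlinarith
    have h3neg : Gf a 2 0 3 < 0 := by
      rw [e3]; nlinarith [sq_nonneg (a+1)]
    have h1np : Gf a 2 0 1 ≤ 0 := by rw [e1]; linarith
    obtain ⟨j₁, hj₁mem, hj₁z⟩ := intermediate_value_Icc (by norm_num : (1:ℝ) ≤ 2) hcont
      (Set.mem_Icc.2 ⟨h1np, h2pos.le⟩)
    obtain ⟨j₂, hj₂mem, hj₂z⟩ := intermediate_value_Icc' (by norm_num : (2:ℝ) ≤ 3) hcont'
      (Set.mem_Icc.2 ⟨h3neg.le, h2pos.le⟩)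
    have hj₁z' : Gf a 2 0 j₁ = 0 := hj₁z
    have hj₂z' : Gf a 2 0 j₂ = 0 := hj₂z
    have hj₁ne : j₁ ≠ j₂ := by
      intro h
      have h2' : j₁ = 2 := le_antisymm hj₁mem.2 (h ▸ hj₂mem.1)
      rw [h2'] at hj₁z'
      linarith [h2pos, hj₁z'.le, hj₁z'.ge]
    -- convert Gf zeros to iotaF zeros
    have hden : ∀ j : ℝ, 1 ≤ j →
        (2*((0:ℕ):ℝ) + 2*j + a + 1) * (2*((0:ℕ):ℝ) + 2*j + a - 1) ≠ 0 := by
      intro j hj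
      have : (0:ℝ) < 2*((0:ℕ):ℝ) + 2*j + a - 1 := by push_cast; linarith
      have : (0:ℝ) < 2*((0:ℕ):ℝ) + 2*j + a + 1 := by push_cast; linarith
      positivity
    have hzero : ∀ j : ℝ, 1 ≤ j → Gf a 2 0 j = 0 → iotaF a (α - β) 2 0 j = 0 := by
      intro j hj hGz
      have hd1 : 2*((0:ℕ):ℝ) + 2*j + a + 1 ≠ 0 := by push_cast; intro h; nlinarith
      have hd2 : 2*((0:ℕ):ℝ) + 2*j + a - 1 ≠ 0 := by push_cast; intro h; nlinarith
      have := iota_mul a (α - β) 2 0 j hd1 hd2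
      have hcast : Gf a ((2:ℕ):ℝ) ((0:ℕ):ℝ) j = Gf a 2 0 j := by norm_num
      rw [hcast, hGz, mul_zero] at this
      exact (mul_eq_zero.1 this).resolve_right (hden j hj)
    have hmem1 : j₁ ∈ Set.Icc (1:ℝ) (2 * ((2:ℕ):ℝ) - 1) := by
      refine Set.mem_Icc.2 ⟨hj₁mem.1, ?_⟩
      push_cast
      linarith [hj₁mem.2]
    have hmem2 : j₂ ∈ Set.Icc (1:ℝ) (2 * ((2:ℕ):ℝ) - 1) := by
      refine Set.mem_Icc.2 ⟨by linarith [hj₂mem.1], ?_⟩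
      push_cast
      linarith [hj₂mem.2]
    exact hj₁ne (H 2 (by norm_num) 0 j₁ hmem1 j₂ hmem2
      (hzero j₁ hj₁mem.1 hj₁z') (hzero j₂ (by linarith [hj₂mem.1]) hj₂z'))
  · -- a > a₀ ⇒ uniqueness
    intro hA m hm s j₁ hj₁ j₂ hj₂ h1 h2
    have hq : 0 < 4*a^2 + 11*a + 3 := by
      nlinarith [mul_pos (by linarith : (0:ℝ) < a - (-11/8 + Real.sqrt 73/8))
        (by nlinarith : (0:ℝ) < a - (-11/8 - Real.sqrt 73/8))]
    rcases Set.mem_Icc.1 hj₁ with ⟨hj₁l, hj₁r⟩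
    rcases Set.mem_Icc.1 hj₂ with ⟨hj₂l, hj₂r⟩
    rcases eq_or_lt_of_le hm with hm1 | hm2
    · -- m = 1 : interval is a point
      have hm1' : (m:ℝ) = 1 := by exact_mod_cast hm1.symm
      rw [hm1'] at hj₁r hj₂r
      have e1 : j₁ = 1 := le_antisymm (by linarith) hj₁l
      have e2 : j₂ = 1 := le_antisymm (by linarith) hj₂l
      rw [e1, e2]
    · have hm2' : (2:ℝ) ≤ (m:ℝ) := by exact_mod_cast hm2
      have hs0 : (0:ℝ) ≤ (s:ℝ) := Nat.cast_nonneg s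
      have hGz : ∀ j : ℝ, 1 ≤ j → iotaF a (α - β) m s j = 0 → Gf a (m:ℝ) (s:ℝ) j = 0 := by
        intro j hj hiz
        have hd2 : 2*(s:ℝ) + 2*j + a - 1 ≠ 0 := by nlinarith
        have hd1 : 2*(s:ℝ) + 2*j + a + 1 ≠ 0 := by nlinarith
        have := iota_mul a (α - β) m s j hd1 hd2
        rw [hiz, zero_mul] at this
        exact ((mul_eq_zero.1 this.symm).resolve_left hb)
      have hG1 := hGz j₁ hj₁l h1
      have hG2 := hGz j₂ hj₂l h2
      rcases lt_trichotomy j₁ j₂ with hlt | heq | hgt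
      · exact absurd hG2 (fun h =>
          Gf_key a (m:ℝ) (s:ℝ) hm2' hs0 ha hq j₁ j₂ hj₁l hlt hG1 h)
      · exact heq
      · exact absurd hG1 (fun h =>
          Gf_key a (m:ℝ) (s:ℝ) hm2' hs0 ha hq j₂ j₁ hj₂l hgt hG2 h)
end

section
/- Let α, β > −1. If a ≥ −11/8 + √73/8, then ι(m,m+s;1) ≥ 0 for all m ≥ 2 and all s ∈ ℕ₀ if and only if b ≥ 0. Furthermore, if a ≥ 0, then ι(m,m+s;1) ≥ 0 for all m ≥ 1 and all s ∈ ℕ₀ if and only if b ≥ 0. -/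
open Polynomial Finset

lemma iota_eval (a b : ℝ) (m s : ℕ) :
    iotaF a b m s 1 = b * ((2*(m:ℝ)-1)*(2*(m:ℝ)+2*(s:ℝ)+1+2*a)*((2*(s:ℝ)+2)*2)/(2*(s:ℝ)+a+3)
      - (2*(m:ℝ))*(2*(m:ℝ)+2*(s:ℝ)+2*a)*((2*(s:ℝ)+1)*1)/(2*(s:ℝ)+a+1)) := by
  unfold iotaF; ring

/-- forward: at (m,s)=(2,1) the bracket is positive, forcing b ≥ 0. -/
lemma iota_forward (a b : ℝ) (ha : -1 < a) (h : 0 ≤ iotaF a b 2 1 1) : 0 ≤ b := by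
  have h3 : (0:ℝ) < a + 3 := by linarith
  have h5 : (0:ℝ) < a + 5 := by linarith
  have e : iotaF a b 2 1 1
      = b * ((2*((2:ℕ):ℝ)-1)*(2*((2:ℕ):ℝ)+2*((1:ℕ):ℝ)+1+2*a)*((2*((1:ℕ):ℝ)+2)*2)/(2*((1:ℕ):ℝ)+a+3)
        - (2*((2:ℕ):ℝ))*(2*((2:ℕ):ℝ)+2*((1:ℕ):ℝ)+2*a)*((2*((1:ℕ):ℝ)+1)*1)/(2*((1:ℕ):ℝ)+a+1)) :=
    iota_eval a b 2 1
  push_cast at e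
  have hpos : (0:ℝ) < (2*2-1)*(2*2+2*1+1+2*a)*((2*1+2)*2)/(2*1+a+3)
      - (2*2)*(2*2+2*1+2*a)*((2*1+1)*1)/(2*1+a+1) := by
    rw [sub_pos, div_lt_div_iff₀ (by linarith) (by linarith)]
    nlinarith [mul_pos (show (0:ℝ) < a+2 by linarith) h3]
  rw [e] at h
  by_contra hb
  push_neg at hb
  exact absurd h (not_le.mpr (mul_neg_of_neg_of_pos hb hpos))

/-- reverse, case m ≥ 2, 4a²+11a+3 ≥ 0 -/
lemma iota_rev2 (a b : ℝ) (ha : -1 < a) (hq : 0 ≤ 4*a^2+11*a+3) (hb : 0 ≤ b)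
    (m : ℕ) (hm : 2 ≤ m) (s : ℕ) : 0 ≤ iotaF a b m s 1 := by
  have hm' : (2:ℝ) ≤ (m:ℝ) := by exact_mod_cast hm
  have hs : (0:ℝ) ≤ (s:ℝ) := Nat.cast_nonneg s
  have h31 : (0:ℝ) ≤ 1 + 3*a := by nlinarith [sq_nonneg (a + 5/16)]
  rw [iota_eval]
  apply mul_nonneg hb
  rw [sub_nonneg, div_le_div_iff₀ (by linarith) (by linarith)]
  have hT1 : (0:ℝ) ≤ ((m:ℝ)-2) * ((3*a+1)*(a+2)) :=
    mul_nonneg (by linarith) (mul_nonneg (by linarith) (by linarith))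
  have hT2 : (0:ℝ) ≤ ((m:ℝ)-2) * (m:ℝ) * (1+3*a) :=
    mul_nonneg (mul_nonneg (by linarith) (by linarith)) h31
  have hT3 : (0:ℝ) ≤ ((m:ℝ)-1) * (s:ℝ) * (4*(2*a+9)*(a+1) + 24*(s:ℝ)*(2+a) + 16*(s:ℝ)^2) := by
    apply mul_nonneg (mul_nonneg (by linarith) hs)
    nlinarith [mul_nonneg hs (show (0:ℝ) ≤ 2+a by linarith), sq_nonneg (s:ℝ),
      mul_nonneg (show (0:ℝ) ≤ 2*a+9 by linarith) (show (0:ℝ) ≤ a+1 by linarith)]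
  have hT4 : (0:ℝ) ≤ ((m:ℝ)-1)^2 * (s:ℝ) * (8*(2+a) + 16*(s:ℝ)) :=
    mul_nonneg (mul_nonneg (sq_nonneg _) hs) (by linarith)
  nlinarith [hq, hT1, hT2, hT3, hT4]

/-- reverse, case m ≥ 1, a ≥ 0 -/
lemma iota_rev1 (a b : ℝ) (ha0 : 0 ≤ a) (hb : 0 ≤ b)
    (m : ℕ) (hm : 1 ≤ m) (s : ℕ) : 0 ≤ iotaF a b m s 1 := by
  have hm' : (1:ℝ) ≤ (m:ℝ) := by exact_mod_cast hm
  have hs : (0:ℝ) ≤ (s:ℝ) := Nat.cast_nonneg s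
  rw [iota_eval]
  apply mul_nonneg hb
  rw [sub_nonneg, div_le_div_iff₀ (by linarith) (by linarith)]
  have hT1 : (0:ℝ) ≤ ((m:ℝ)-1) * (12*a^2+28*a+8 + (s:ℝ)*(8*a^2+44*a+36)
      + (s:ℝ)^2*(24*a+48) + 16*(s:ℝ)^3) := by
    apply mul_nonneg (by linarith)
    nlinarith [mul_nonneg hs (sq_nonneg a), mul_nonneg hs ha0, sq_nonneg (s:ℝ),
      mul_nonneg (sq_nonneg (s:ℝ)) ha0, mul_nonneg (sq_nonneg (s:ℝ)) hs, sq_nonneg a]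
  have hT2 : (0:ℝ) ≤ ((m:ℝ)-1)^2 * (4+12*a + (s:ℝ)*(8*a+16) + 16*(s:ℝ)^2) := by
    apply mul_nonneg (sq_nonneg _)
    nlinarith [mul_nonneg hs ha0, sq_nonneg (s:ℝ)]
  nlinarith [mul_nonneg ha0 (show (0:ℝ) ≤ a+1 by linarith), hT1, hT2]

/-- If `a ≥ −11/8 + √73/8`, then `ι(m,m+s;1) ≥ 0` for all `m ≥ 2`, `s ∈ ℕ₀` iff `b ≥ 0`;
and if `a ≥ 0`, then `ι(m,m+s;1) ≥ 0` for all `m ≥ 1`, `s ∈ ℕ₀` iff `b ≥ 0`. -/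
theorem stmt9 (α β : ℝ) (hα : -1 < α) (hβ : -1 < β) :
    (-11 / 8 + Real.sqrt 73 / 8 ≤ α + β + 1 →
      ((∀ m : ℕ, 2 ≤ m → ∀ s : ℕ, 0 ≤ iotaF (α + β + 1) (α - β) m s 1) ↔ 0 ≤ α - β)) ∧
    (0 ≤ α + β + 1 →
      ((∀ m : ℕ, 1 ≤ m → ∀ s : ℕ, 0 ≤ iotaF (α + β + 1) (α - β) m s 1) ↔ 0 ≤ α - β)) := by
  have ha : (-1:ℝ) < α + β + 1 := by linarith
  constructor
  · intro hA
    constructor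
    · intro H
      exact iota_forward _ _ ha (H 2 le_rfl 1)
    · intro hb m hm s
      have hq : (0:ℝ) ≤ 4*(α+β+1)^2 + 11*(α+β+1) + 3 := by
        nlinarith [Real.sq_sqrt (show (0:ℝ) ≤ 73 by norm_num), Real.sqrt_nonneg (73:ℝ), hA]
      exact iota_rev2 _ _ ha hq hb m hm s
  · intro hA
    constructor
    · intro H
      exact iota_forward _ _ ha (H 2 (by norm_num) 1)
    · intro hb m hm s
      exact iota_rev1 _ _ hA hb m hm s
end

section
/- Let α, β > −1 and m, n ∈ ℕ₀. Then T_{2m+1}^{(α,β)} · T_{2n+1}^{(α,β)} = Σ_{k=|m−n|}^{m+n} g_R⁺(m,n;k) · [ ((2k+a+b+1)/(4k+2a+2)) · T_{2k+2}^{(α,β)} + ((2k+a−b+1)/(4k+2a+2)) · T_{2k}^{(α,β)} ], where g_R⁺(m,n;k) are the linearization coefficients of the Jacobi polynomials (R_n^{(α,β+1)}). -/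
open Polynomial Finset

/-!
With `y = 2x² - 1` one has `x² = (1 + y) / 2`, and Christoffel's contiguous relation writes
`(1 + y) / 2 · R_k^{(α,β+1)}(y)` as `A_k R_{k+1}^{(α,β)}(y) + B_k R_k^{(α,β)}(y)` with
`A_k = (k+α+1)/(2k+α+β+2)` and `B_k = (k+β+1)/(2k+α+β+2)`. In Chebyshev terms this is the
recurrence `x T_{2k+1} = a_k T_{2k+2} + c_k T_{2k}`. Since `T_{2m+1} T_{2n+1} = x² (R_m R_n)(2x² - 1)`,
linearizing `R_m R_n` and applying the recurrence termwise gives the formula.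
-/

lemma poch_zero (c : ℝ) : poch c 0 = 1 := by simp [poch]

lemma poch_succ (c : ℝ) (k : ℕ) : poch c (k + 1) = poch c k * (c + k) :=
  ascPochhammer_succ_eval k c

lemma poch_succ' (c : ℝ) (k : ℕ) : poch c (k + 1) = c * poch (c + 1) k := by
  simp [poch, ascPochhammer_succ_left, eval_comp]

lemma poch_pos {c : ℝ} (hc : 0 < c) (k : ℕ) : 0 < poch c k :=
  ascPochhammer_pos k c hc

lemma poch_neg_natCast_of_lt {n k : ℕ} (h : n < k) : poch (-(n : ℝ)) k = 0 :=
  ascPochhammer_eval_neg_coe_nat_of_lt h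

lemma C_half_mul_two : (C (1 / 2 : ℝ) : ℝ[X]) * 2 = 1 := by
  rw [← map_ofNat C 2, ← C_mul]; norm_num

section Jacobi

variable (α β : ℝ)

noncomputable def jacobiCoeff (n k : ℕ) : ℝ :=
  poch (-(n : ℝ)) k * poch ((n : ℝ) + α + β + 1) k /
    (poch (α + 1) k * 2 ^ k * (k.factorial : ℝ))

lemma jacobiCoeff_zero (n : ℕ) : jacobiCoeff α β n 0 = 1 := by
  simp [jacobiCoeff, poch_zero]

lemma jacobiR_eq_sum_range {n N : ℕ} (h : n < N) :
    jacobiR α β n = ∑ k ∈ range N, C (jacobiCoeff α β n k) * (1 - X) ^ k := by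
  refine sum_subset (range_subset_range.2 h) fun k hkN hkn => ?_
  have hnk : n < k := by simpa using hkn
  simp [poch_neg_natCast_of_lt hnk]

variable {α β}

lemma jacobiCoeff_contiguous_succ (hα : -1 < α) (hβ : -1 < β) (n k : ℕ) :
    ((n : ℝ) + α + 1) / (2 * n + α + β + 2) * jacobiCoeff α β (n + 1) (k + 1)
      + ((n : ℝ) + β + 1) / (2 * n + α + β + 2) * jacobiCoeff α β n (k + 1) =
    jacobiCoeff α (β + 1) n (k + 1) - jacobiCoeff α (β + 1) n k / 2 := by
  have hn : (0 : ℝ) ≤ n := n.cast_nonneg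
  have hk : (0 : ℝ) ≤ k := k.cast_nonneg
  have hαk : α + 1 + k ≠ 0 := by linarith
  have hpoch : poch (α + 1) k ≠ 0 := (poch_pos (by linarith) k).ne'
  have hfac : (k.factorial : ℝ) ≠ 0 := by positivity
  simp only [jacobiCoeff, Nat.factorial_succ, Nat.cast_mul, pow_succ, poch_succ (α + 1),
    poch_succ (-(n : ℝ)), poch_succ' (-((n + 1 : ℕ) : ℝ)), poch_succ' ((n : ℝ) + α + β + 1)]
  rw [poch_succ ((n : ℝ) + α + (β + 1) + 1), poch_succ (((n + 1 : ℕ) : ℝ) + α + β + 1)]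
  push_cast
  rw [show -((n : ℝ) + 1) + 1 = -n by ring, show (n : ℝ) + 1 + α + β + 1 = n + α + β + 1 + 1 by ring,
    show (n : ℝ) + α + (β + 1) + 1 = n + α + β + 1 + 1 by ring]
  field_simp
  rw [div_eq_iff (by linarith)]
  ring

theorem jacobiR_contiguous (hα : -1 < α) (hβ : -1 < β) (n : ℕ) :
    C (((n : ℝ) + α + 1) / (2 * n + α + β + 2)) * jacobiR α β (n + 1)
      + C (((n : ℝ) + β + 1) / (2 * n + α + β + 2)) * jacobiR α β n =
    C (1 / 2 : ℝ) * (1 + X) * jacobiR α (β + 1) n := by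
  set A : ℝ := ((n : ℝ) + α + 1) / (2 * n + α + β + 2)
  set B : ℝ := ((n : ℝ) + β + 1) / (2 * n + α + β + 2)
  -- On the right, the `(1 - X)` factor shifts the expansion of `R^{(α,β+1)}_n` by one degree.
  have half : C (1 / 2 : ℝ) * (1 + X) = 1 - C (1 / 2 : ℝ) * (1 - X) := by
    linear_combination C_half_mul_two
  have hAB : A + B = 1 := by
    have : (2 * n + α + β + 2 : ℝ) ≠ 0 := by linarith [n.cast_nonneg (α := ℝ)]
    rw [← add_div, div_eq_one_iff_eq this]; ring
  have hconst : C A * C (jacobiCoeff α β (n + 1) 0) + C B * C (jacobiCoeff α β n 0) =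
      C (jacobiCoeff α (β + 1) n 0) := by
    simp only [jacobiCoeff_zero, ← C_mul, ← C_add, mul_one, hAB]
  have hterm : ∀ k : ℕ,
      C A * (C (jacobiCoeff α β (n + 1) (k + 1)) * (1 - X) ^ (k + 1))
        + C B * (C (jacobiCoeff α β n (k + 1)) * (1 - X) ^ (k + 1)) =
      C (jacobiCoeff α (β + 1) n (k + 1)) * (1 - X) ^ (k + 1)
        - C (1 / 2 : ℝ) * (1 - X) * (C (jacobiCoeff α (β + 1) n k) * (1 - X) ^ k) := by
    intro k
    have h := congrArg C (jacobiCoeff_contiguous_succ hα hβ n k)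
    rw [div_eq_mul_one_div (jacobiCoeff α (β + 1) n k)] at h
    simp only [C_add, C_mul, C_sub] at h
    linear_combination (1 - X) ^ (k + 1) * h
  have hsum := sum_congr rfl fun k (_ : k ∈ range (n + 1)) => hterm k
  rw [sum_add_distrib, sum_sub_distrib] at hsum
  rw [half, sub_mul, one_mul, jacobiR_eq_sum_range α β (by omega : n + 1 < n + 2),
    jacobiR_eq_sum_range α β (by omega : n < n + 2)]
  nth_rw 1 [jacobiR_eq_sum_range α (β + 1) (by omega : n < n + 2)]
  rw [jacobiR_eq_sum_range α (β + 1) n.lt_succ_self, sum_range_succ' _ (n + 1),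
    sum_range_succ' _ (n + 1), sum_range_succ' _ (n + 1), mul_add, mul_add, mul_sum, mul_sum, mul_sum]
  linear_combination hsum + hconst

end Jacobi

section Chebyshev

variable (α β : ℝ)

lemma genCheb_two_mul (k : ℕ) : genCheb α β (2 * k) = (jacobiR α β k).comp (2 * X ^ 2 - 1) := by
  simp [genCheb]

lemma genCheb_two_mul_add_one (k : ℕ) :
    genCheb α β (2 * k + 1) = X * (jacobiR α (β + 1) k).comp (2 * X ^ 2 - 1) := by
  simp [genCheb, Nat.add_mod, Nat.add_div]

variable {α β}

theorem X_mul_genCheb_two_mul_add_one (hα : -1 < α) (hβ : -1 < β) (k : ℕ) :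
    X * genCheb α β (2 * k + 1) =
      C (aTc (α + β + 1) (α - β) k) * genCheb α β (2 * k + 2)
        + C (cTc (α + β + 1) (α - β) k) * genCheb α β (2 * k) := by
  have hden : (4 * k + 2 * (α + β + 1) + 2 : ℝ) ≠ 0 := by linarith [k.cast_nonneg (α := ℝ)]
  have hden' : (2 * k + α + β + 2 : ℝ) ≠ 0 := by linarith [k.cast_nonneg (α := ℝ)]
  have ha : aTc (α + β + 1) (α - β) k = ((k : ℝ) + α + 1) / (2 * k + α + β + 2) := by
    rw [aTc, div_eq_div_iff hden hden']; ring
  have hc : cTc (α + β + 1) (α - β) k = ((k : ℝ) + β + 1) / (2 * k + α + β + 2) := by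
    rw [cTc, div_eq_div_iff hden hden']; ring
  have h := congrArg (·.comp (2 * X ^ 2 - 1 : ℝ[X])) (jacobiR_contiguous hα hβ k)
  simp only [add_comp, mul_comp, C_comp, one_comp, X_comp] at h
  rw [ha, hc, show 2 * k + 2 = 2 * (k + 1) by ring, genCheb_two_mul, genCheb_two_mul,
    genCheb_two_mul_add_one, h]
  linear_combination -(X ^ 2 * (jacobiR α (β + 1) k).comp (2 * X ^ 2 - 1)) * C_half_mul_two

end Chebyshev

/-- Linearization of products of odd-degree generalized Chebyshev polynomials in terms of
the Jacobi linearization coefficients `g_R⁺` of `(R_n^{(α,β+1)})`. -/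
theorem stmt12 (α β : ℝ) (hα : -1 < α) (hβ : -1 < β)
    (g : ℕ → ℕ → ℕ → ℝ)
    (hg : ∀ m n : ℕ, jacobiR α (β + 1) m * jacobiR α (β + 1) n =
      ∑ k ∈ Finset.Icc (Nat.dist m n) (m + n), Polynomial.C (g m n k) * jacobiR α (β + 1) k)
    (m n : ℕ) :
    genCheb α β (2 * m + 1) * genCheb α β (2 * n + 1) =
      ∑ k ∈ Finset.Icc (Nat.dist m n) (m + n),
        Polynomial.C (g m n k) *
          (Polynomial.C ((2 * (k : ℝ) + (α + β + 1) + (α - β) + 1) /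
              (4 * (k : ℝ) + 2 * (α + β + 1) + 2)) * genCheb α β (2 * k + 2) +
           Polynomial.C ((2 * (k : ℝ) + (α + β + 1) - (α - β) + 1) /
              (4 * (k : ℝ) + 2 * (α + β + 1) + 2)) * genCheb α β (2 * k)) := by
  calc genCheb α β (2 * m + 1) * genCheb α β (2 * n + 1)
      = X * (X * (jacobiR α (β + 1) m * jacobiR α (β + 1) n).comp (2 * X ^ 2 - 1)) := by
        rw [genCheb_two_mul_add_one, genCheb_two_mul_add_one, mul_comp]; ring
    _ = ∑ k ∈ Icc (Nat.dist m n) (m + n), C (g m n k) * (X * genCheb α β (2 * k + 1)) := by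
        simp only [hg, Polynomial.sum_comp, mul_sum, mul_comp, C_comp, genCheb_two_mul_add_one]
        exact sum_congr rfl fun k _ => by ring
    _ = _ := by simp only [X_mul_genCheb_two_mul_add_one hα hβ, aTc, cTc]
end

section
/- Every (α,β) ∈ V satisfies α+β+1 > −11/8 + √73/8. -/
open Polynomial Finset

set_option maxHeartbeats 1200000 in
/-- Every `(α,β) ∈ V` satisfies `α+β+1 > −11/8 + √73/8`. -/
theorem stmt13 (α β : ℝ) (hV : (α, β) ∈ Vset) :
    -11 / 8 + Real.sqrt 73 / 8 < α + β + 1 := by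
  simp only [Vset, Set.mem_setOf_eq] at hV
  obtain ⟨hα, hβ, hineq, hb⟩ := hV
  by_contra hcon
  push_neg at hcon
  have s73 : Real.sqrt 73 ^ 2 = 73 := Real.sq_sqrt (by norm_num)
  have s8 : (8 : ℝ) ≤ Real.sqrt 73 := by
    nlinarith [Real.sqrt_nonneg 73, s73]
  have s9 : Real.sqrt 73 ≤ 9 := by
    nlinarith [Real.sqrt_nonneg 73, s73]
  set a := α + β + 1 with ha
  set b := α - β with hbdef
  have hba : b < a + 1 := by simp [ha, hbdef]; linarith
  have hag : -1 < a := by simp [ha]; linarith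
  have han : a < 0 := by nlinarith
  -- a² - 7a - 24 < 0
  have h1 : a ^ 2 - 7 * a - 24 < 0 := by nlinarith
  -- 4a² + 11a + 3 ≤ 0
  have h2 : 4 * a ^ 2 + 11 * a + 3 ≤ 0 := by nlinarith
  -- f(a) ≤ 0
  have h3 : a * (a + 5) * (a + 3) ^ 2 ≤ (a ^ 2 - 7 * a - 24) * (a + 1) ^ 2 := by
    nlinarith [sq_nonneg (a + 2), mul_nonneg (le_of_lt (by linarith : (0:ℝ) < a + 2)) (neg_nonneg.mpr h2)]
  have hb2 : b ^ 2 < (a + 1) ^ 2 := by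
    rw [sq, sq]; exact mul_self_lt_mul_self hb hba
  nlinarith [mul_lt_mul_of_neg_left hb2 h1]
end

section
/- One has V ⊆ V′; moreover, every (α,β) ∈ V′ satisfies α ≥ −1/2. -/
open Polynomial Finset

lemma auxA (a b : ℝ) (hb : 0 ≤ b) (h2 : -1 < a - b)
    (h3 : (a^2 - 7*a - 24) * b^2 ≤ a * (a+5) * (a+3)^2) :
    0 ≤ a^2 + 2*b^2 + 3*a := by
  by_contra hc
  push_neg at hc
  have ha1 : -1 < a := by nlinarith
  have ha0 : a < 0 := by nlinarith
  nlinarith [sq_nonneg b, mul_pos (by linarith : (0:ℝ) < a+1) (by linarith : (0:ℝ) < a+2),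
    mul_pos (by linarith : (0:ℝ) < -a) (by linarith : (0:ℝ) < a+3),
    mul_nonneg (mul_nonneg hb hb) (by nlinarith : (0:ℝ) ≤ 24 + 7*a - a^2)]

lemma auxB (a b : ℝ) (hb : 0 ≤ b) (h1 : -1 < a + b) (h2 : -1 < a - b)
    (h3 : 0 ≤ a^2 + 2*b^2 + 3*a) : 0 ≤ a + b := by
  by_contra hc
  push_neg at hc
  nlinarith [mul_pos (by linarith : (0:ℝ) < -(a+b)) (by linarith : (0:ℝ) < a-b+1),
    mul_pos (by linarith : (0:ℝ) < -(a+b)) (by linarith : (0:ℝ) < a+b+1), sq_nonneg b]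

/-- One has `V ⊆ V′`, and every `(α,β) ∈ V′` satisfies `α ≥ −1/2`. -/
theorem stmt14 : Vset ⊆ V'set ∧ ∀ p ∈ V'set, -(1 / 2 : ℝ) ≤ p.1 := by
  constructor
  · rintro ⟨x, y⟩ ⟨h1, h2, h3, h4⟩
    refine ⟨h1, h2, ?_, h4⟩
    have := auxA (x + y + 1) (x - y) h4 (by linarith)
      (by ring_nf; ring_nf at h3; linarith)
    linarith [this]
  · rintro ⟨x, y⟩ ⟨h1, h2, h3, h4⟩
    have := auxB (x + y + 1) (x - y) h4 (by linarith) (by linarith) (by linarith)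
    simp only at this ⊢
    linarith
end

section
/- The topological interior of V in ℝ² equals the set {(α,β) ∈ (−1,∞)² : (a²+2b²+3a)(a+3)(a+5) > 3(a+1)(a+2)b² and b > 0}. -/
open Polynomial Finset

/-- The topological interior of `V` in `ℝ²`. -/
theorem stmt17 : interior Vset = { p : ℝ × ℝ | -1 < p.1 ∧ -1 < p.2 ∧
    3 * ((p.1 + p.2 + 1) + 1) * ((p.1 + p.2 + 1) + 2) * (p.1 - p.2) ^ 2 <
      ((p.1 + p.2 + 1) ^ 2 + 2 * (p.1 - p.2) ^ 2 + 3 * (p.1 + p.2 + 1)) *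
        ((p.1 + p.2 + 1) + 3) * ((p.1 + p.2 + 1) + 5) ∧
    0 < p.1 - p.2 } := by
  
  ext p
  simp only [Set.mem_setOf_eq]
  constructor
  · intro hp
    obtain ⟨ε, hε, hball⟩ := Metric.mem_nhds_iff.mp (mem_interior_iff_mem_nhds.mp hp)
    obtain ⟨h1, h2, hF, hb⟩ := hball (Metric.mem_ball_self hε)
    have hbpos : 0 < p.1 - p.2 := by
      rcases hb.lt_or_eq with h | h
      · exact h
      · exfalso
        have hd : dist ((p.1 - ε/2, p.2) : ℝ × ℝ) p = ε/2 := by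
          rw [Prod.dist_eq, Real.dist_eq, Real.dist_eq,
            show p.1 - ε/2 - p.1 = -(ε/2) by ring, abs_neg, sub_self, abs_zero,
            abs_of_nonneg (by linarith), max_eq_left (by linarith)]
        have hq : ((p.1 - ε/2, p.2) : ℝ × ℝ) ∈ Metric.ball p ε := by
          rw [Metric.mem_ball, hd]; linarith
        obtain ⟨_, _, _, hb'⟩ := hball hq
        simp only at hb'
        linarith
    refine ⟨h1, h2, ?_, hbpos⟩
    rcases hF.lt_or_eq with hlt | heq
    · nlinarith [hlt]
    · exfalso
      rcases lt_trichotomy ((p.1 + p.2 + 1) ^ 2 - 7 * (p.1 + p.2 + 1) - 24) 0 with hc | hc | hc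
      · -- c < 0 : perturb to decrease b
        set δ : ℝ := min ε (p.1 - p.2) / 2 with hδdef
        have hδpos : 0 < δ := by
          have := lt_min hε hbpos
          positivity
        have hδε : δ < ε := by
          have : min ε (p.1 - p.2) ≤ ε := min_le_left _ _
          linarith
        have hδb : δ < p.1 - p.2 := by
          have : min ε (p.1 - p.2) ≤ p.1 - p.2 := min_le_right _ _
          linarith
        have hd : dist ((p.1 - δ, p.2 + δ) : ℝ × ℝ) p = δ := by
          rw [Prod.dist_eq, Real.dist_eq, Real.dist_eq,
            show p.1 - δ - p.1 = -δ by ring, abs_neg,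
            show p.2 + δ - p.2 = δ by ring,
            abs_of_nonneg hδpos.le, max_self]
        have hq : ((p.1 - δ, p.2 + δ) : ℝ × ℝ) ∈ Metric.ball p ε := by
          rw [Metric.mem_ball, hd]; exact hδε
        obtain ⟨_, _, hF', _⟩ := hball hq
        simp only at hF'
        have ha : (p.1 - δ) + (p.2 + δ) + 1 = p.1 + p.2 + 1 := by ring
        rw [ha] at hF'
        nlinarith [hF', heq, mul_pos (neg_pos.mpr hc) (mul_pos (by linarith : (0:ℝ) < 4*δ) (by linarith : (0:ℝ) < (p.1 - p.2) - δ))]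
      · -- c = 0
        have h0 : (p.1 + p.2 + 1) * ((p.1 + p.2 + 1) + 5) * ((p.1 + p.2 + 1) + 3) ^ 2 = 0 := by
          rw [← heq, hc, zero_mul]
        have hid : (p.1+p.2+1)*((p.1+p.2+1)+5)*((p.1+p.2+1)+3)^2 =
            ((p.1+p.2+1)^2 - 7*(p.1+p.2+1) - 24)*((p.1+p.2+1)^2+18*(p.1+p.2+1)+189)
            + 1800*(p.1+p.2+1) + 4536 := by ring
        rw [h0, hc, zero_mul] at hid
        linarith
      · -- c > 0 : perturb to increase b
        set δ : ℝ := min ε (p.2 + 1) / 2 with hδdef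
        have hδpos : 0 < δ := by
          have := lt_min hε (by linarith : (0:ℝ) < p.2 + 1)
          positivity
        have hδε : δ < ε := by
          have : min ε (p.2 + 1) ≤ ε := min_le_left _ _
          linarith
        have hδ2 : -1 < p.2 - δ := by
          have : min ε (p.2 + 1) ≤ p.2 + 1 := min_le_right _ _
          linarith
        have hd : dist ((p.1 + δ, p.2 - δ) : ℝ × ℝ) p = δ := by
          rw [Prod.dist_eq, Real.dist_eq, Real.dist_eq,
            show p.1 + δ - p.1 = δ by ring,
            show p.2 - δ - p.2 = -δ by ring, abs_neg,
            abs_of_nonneg hδpos.le, max_self]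
        have hq : ((p.1 + δ, p.2 - δ) : ℝ × ℝ) ∈ Metric.ball p ε := by
          rw [Metric.mem_ball, hd]; exact hδε
        obtain ⟨_, _, hF', _⟩ := hball hq
        simp only at hF'
        have ha : (p.1 + δ) + (p.2 - δ) + 1 = p.1 + p.2 + 1 := by ring
        rw [ha] at hF'
        nlinarith [hF', heq, mul_pos hc (mul_pos (by linarith : (0:ℝ) < 4*δ) (by linarith : (0:ℝ) < (p.1 - p.2) + δ))]
  · rintro ⟨h1, h2, hs, hb⟩
    have hopen : IsOpen { q : ℝ × ℝ | -1 < q.1 ∧ -1 < q.2 ∧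
        3 * ((q.1 + q.2 + 1) + 1) * ((q.1 + q.2 + 1) + 2) * (q.1 - q.2) ^ 2 <
          ((q.1 + q.2 + 1) ^ 2 + 2 * (q.1 - q.2) ^ 2 + 3 * (q.1 + q.2 + 1)) *
            ((q.1 + q.2 + 1) + 3) * ((q.1 + q.2 + 1) + 5) ∧
        0 < q.1 - q.2 } := by
      refine (isOpen_lt continuous_const continuous_fst).inter
        ((isOpen_lt continuous_const continuous_snd).inter (IsOpen.inter ?_ ?_))
      · exact isOpen_lt
          (f := fun q : ℝ × ℝ => 3 * ((q.1 + q.2 + 1) + 1) * ((q.1 + q.2 + 1) + 2) * (q.1 - q.2) ^ 2)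
          (g := fun q : ℝ × ℝ => ((q.1 + q.2 + 1) ^ 2 + 2 * (q.1 - q.2) ^ 2 + 3 * (q.1 + q.2 + 1)) *
            ((q.1 + q.2 + 1) + 3) * ((q.1 + q.2 + 1) + 5))
          (by fun_prop) (by fun_prop)
      · exact isOpen_lt (f := fun _ : ℝ × ℝ => (0:ℝ)) (g := fun q : ℝ × ℝ => q.1 - q.2)
          continuous_const (by fun_prop)
    have hsub : { q : ℝ × ℝ | -1 < q.1 ∧ -1 < q.2 ∧
        3 * ((q.1 + q.2 + 1) + 1) * ((q.1 + q.2 + 1) + 2) * (q.1 - q.2) ^ 2 <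
          ((q.1 + q.2 + 1) ^ 2 + 2 * (q.1 - q.2) ^ 2 + 3 * (q.1 + q.2 + 1)) *
            ((q.1 + q.2 + 1) + 3) * ((q.1 + q.2 + 1) + 5) ∧
        0 < q.1 - q.2 } ⊆ Vset := by
      rintro q ⟨k1, k2, k3, k4⟩
      exact ⟨k1, k2, by nlinarith [k3], k4.le⟩
    exact interior_maximal hsub hopen ⟨h1, h2, hs, hb⟩
end
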